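/- arXiv:2311.00088 — 2 statements merged into one kernel-verified Lean document; each statement's English description precedes it below -/
import Mathlib

section
/- Let d ≥ 1, let f : ℝ^d → ℝ be L-smooth with f ≥ 0, fix θ ∈ ℝ^d, and let G : Ω → ℝ^d be a random vector on a probability space (Ω, 𝔉, P) such that E[G] = ∇f(θ) and E[|G_i − ∂_i f(θ)|²] ≤ σ² for every coordinate 1 ≤ i ≤ d, where σ > 0. Assume the PL inequality ‖∇f(θ)‖₂² ≥ 2μ f(θ) holds at θ for some μ > 0, that 0 < a ≤ 1/L, and that f(θ) > L a σ² d / μ. Then E[ f(θ − a G) ] ≤ (1 − μ a / 2) f(θ). -/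
/-!
Along the segment from `x` to `y`, `L`-Lipschitz continuity of `∇f` bounds the derivative of
`f` by that of the quadratic model `f x + t ⟪∇f x, y - x⟫ + L t² ‖y - x‖² / 2`, which yields
the descent inequality. Taking expectations in it at `y = θ - a G` and using `E[G] = ∇f(θ)`
together with `E‖G‖² = E‖G - ∇f(θ)‖² + ‖∇f(θ)‖² ≤ σ² d + ‖∇f(θ)‖²` gives
`E f(θ - a G) ≤ f(θ) - (a/2) ‖∇f(θ)‖² + L a² σ² d / 2` since `a L ≤ 1`.
The PL inequality and the lower bound on `f(θ)` turn this into the contraction.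
-/

open MeasureTheory
open scoped RealInnerProductSpace

section Descent

variable {E : Type*} [NormedAddCommGroup E] [InnerProductSpace ℝ E] [CompleteSpace E]
  {f : E → ℝ} {L : ℝ}

theorem le_add_inner_gradient_add_half_mul_norm_sq (hf : Differentiable ℝ f)
    (hsmooth : ∀ x y, ‖gradient f x - gradient f y‖ ≤ L * ‖x - y‖) (x y : E) :
    f y ≤ f x + ⟪gradient f x, y - x⟫ + L / 2 * ‖y - x‖ ^ 2 := by
  set v := y - x
  have hline (t : ℝ) : HasDerivAt (fun t : ℝ => x + t • v) v t := by
    simpa using ((hasDerivAt_id t).smul_const v).const_add x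
  have hφ (t : ℝ) : HasDerivAt (fun t : ℝ => f (x + t • v)) ⟪gradient f (x + t • v), v⟫ t :=
    (hf _).hasGradientAt.hasFDerivAt.comp_hasDerivAt t (hline t)
  have hB (t : ℝ) : HasDerivAt
      (fun t : ℝ => f x + t * ⟪gradient f x, v⟫ + L / 2 * t ^ 2 * ‖v‖ ^ 2)
      (⟪gradient f x, v⟫ + L * t * ‖v‖ ^ 2) t :=
    ((((hasDerivAt_id' t).mul_const _).const_add (f x)).add
      (((hasDerivAt_pow 2 t).const_mul (L / 2)).mul_const (‖v‖ ^ 2))).congr_deriv (by ring)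
  have hderiv_le (t : ℝ) (ht : 0 ≤ t) :
      ⟪gradient f (x + t • v), v⟫ ≤ ⟪gradient f x, v⟫ + L * t * ‖v‖ ^ 2 := by
    have hlip : ‖gradient f (x + t • v) - gradient f x‖ ≤ L * t * ‖v‖ := by
      simpa [norm_smul, abs_of_nonneg ht, mul_assoc] using hsmooth (x + t • v) x
    calc ⟪gradient f (x + t • v), v⟫
        = ⟪gradient f x, v⟫ + ⟪gradient f (x + t • v) - gradient f x, v⟫ := by
          rw [inner_sub_left]; ring
      _ ≤ ⟪gradient f x, v⟫ + L * t * ‖v‖ * ‖v‖ := by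
          gcongr
          exact (real_inner_le_norm _ _).trans (by gcongr)
      _ = ⟪gradient f x, v⟫ + L * t * ‖v‖ ^ 2 := by ring
  have hmodel := image_le_of_deriv_right_le_deriv_boundary (a := 0) (b := 1)
    (fun t _ => (hφ t).continuousAt.continuousWithinAt) (fun t _ => (hφ t).hasDerivWithinAt)
    (by simp) (fun t _ => (hB t).continuousAt.continuousWithinAt)
    (fun t _ => (hB t).hasDerivWithinAt) (fun t ht => hderiv_le t ht.1)
    (Set.right_mem_Icc.mpr zero_le_one)
  simpa [v] using hmodel

theorem apply_sub_smul_le (hf : Differentiable ℝ f)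
    (hsmooth : ∀ x y, ‖gradient f x - gradient f y‖ ≤ L * ‖x - y‖) (x v : E) (a : ℝ) :
    f (x - a • v) ≤ f x - a * ⟪gradient f x, v⟫ + L * a ^ 2 / 2 * ‖v‖ ^ 2 := by
  have h := le_add_inner_gradient_add_half_mul_norm_sq hf hsmooth x (x - a • v)
  rw [sub_sub_cancel_left, inner_neg_right, real_inner_smul_right, norm_neg, norm_smul,
    mul_pow, Real.norm_eq_abs, sq_abs] at h
  linarith

theorem integral_comp_sub_smul_le (hf : Differentiable ℝ f) (hf₀ : ∀ x, 0 ≤ f x)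
    (hsmooth : ∀ x y, ‖gradient f x - gradient f y‖ ≤ L * ‖x - y‖) (θ : E)
    {Ω : Type*} [MeasurableSpace Ω] {P : Measure Ω} [IsProbabilityMeasure P] {X : Ω → E}
    (hX : Integrable X P) (hXsq : Integrable (fun ω => ‖X ω‖ ^ 2) P)
    (hmean : ∫ ω, X ω ∂P = gradient f θ) (a : ℝ) :
    ∫ ω, f (θ - a • X ω) ∂P ≤
      f θ - a * ‖gradient f θ‖ ^ 2 + L * a ^ 2 / 2 * ∫ ω, ‖X ω‖ ^ 2 ∂P := by
  have hlin_int : Integrable (fun ω => f θ - a * ⟪gradient f θ, X ω⟫) P :=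
    (integrable_const _).sub ((hX.const_inner _).const_mul a)
  have hbound_int : Integrable
      (fun ω => f θ - a * ⟪gradient f θ, X ω⟫ + L * a ^ 2 / 2 * ‖X ω‖ ^ 2) P :=
    hlin_int.add (hXsq.const_mul _)
  have hstep_int : Integrable (fun ω => f (θ - a • X ω)) P := by
    refine hbound_int.mono' (hf.continuous.comp_aestronglyMeasurable
        (aestronglyMeasurable_const.sub (hX.aestronglyMeasurable.const_smul a)))
      (Filter.Eventually.of_forall fun ω => ?_)
    rw [Real.norm_eq_abs, abs_of_nonneg (hf₀ _)]
    exact apply_sub_smul_le hf hsmooth θ (X ω) a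
  calc ∫ ω, f (θ - a • X ω) ∂P
      ≤ ∫ ω, (f θ - a * ⟪gradient f θ, X ω⟫ + L * a ^ 2 / 2 * ‖X ω‖ ^ 2) ∂P :=
        integral_mono hstep_int hbound_int fun ω => apply_sub_smul_le hf hsmooth θ (X ω) a
    _ = f θ - a * ‖gradient f θ‖ ^ 2 + L * a ^ 2 / 2 * ∫ ω, ‖X ω‖ ^ 2 ∂P := by
        rw [integral_add hlin_int (hXsq.const_mul _),
          integral_sub (integrable_const _) ((hX.const_inner _).const_mul a),
          integral_const_mul, integral_const_mul, integral_inner hX, hmean,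
          real_inner_self_eq_norm_sq]
        simp

end Descent

section SecondMoment

variable {Ω : Type*} [MeasurableSpace Ω] {P : Measure Ω}

theorem norm_sq_eq_norm_sub_sq_add {E : Type*} [NormedAddCommGroup E] [InnerProductSpace ℝ E]
    (x m : E) : ‖x‖ ^ 2 = ‖x - m‖ ^ 2 + 2 * ⟪m, x⟫ - ‖m‖ ^ 2 := by
  rw [norm_sub_sq_real, real_inner_comm]; ring

theorem integrable_norm_sq_of_integrable_norm_sub_sq [IsFiniteMeasure P] {E : Type*}
    [NormedAddCommGroup E] [InnerProductSpace ℝ E] {X : Ω → E} {m : E} (hX : Integrable X P)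
    (hvar : Integrable (fun ω => ‖X ω - m‖ ^ 2) P) :
    Integrable (fun ω => ‖X ω‖ ^ 2) P := by
  simp_rw [norm_sq_eq_norm_sub_sq_add (X _) m]
  exact (hvar.add ((hX.const_inner m).const_mul 2)).sub (integrable_const _)

theorem integral_norm_sq_eq_integral_norm_sub_sq_add [IsProbabilityMeasure P] {E : Type*}
    [NormedAddCommGroup E] [InnerProductSpace ℝ E] [CompleteSpace E] {X : Ω → E} {m : E}
    (hX : Integrable X P) (hm : ∫ ω, X ω ∂P = m)
    (hvar : Integrable (fun ω => ‖X ω - m‖ ^ 2) P) :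
    ∫ ω, ‖X ω‖ ^ 2 ∂P = ∫ ω, ‖X ω - m‖ ^ 2 ∂P + ‖m‖ ^ 2 := by
  have hlin : Integrable (fun ω => 2 * ⟪m, X ω⟫) P := (hX.const_inner m).const_mul 2
  simp_rw [norm_sq_eq_norm_sub_sq_add (X _) m]
  rw [integral_sub (by exact hvar.add hlin :
      Integrable (fun ω => ‖X ω - m‖ ^ 2 + 2 * ⟪m, X ω⟫) P) (integrable_const _),
    integral_add hvar hlin, integral_const_mul, integral_inner hX, hm,
    real_inner_self_eq_norm_sq]
  simp
  ring

variable {ι : Type*} [Fintype ι] {X : Ω → EuclideanSpace ℝ ι} {m : EuclideanSpace ℝ ι}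

theorem EuclideanSpace.norm_sub_sq_eq_sum_abs_sq (x y : EuclideanSpace ℝ ι) :
    ‖x - y‖ ^ 2 = ∑ i, |x i - y i| ^ 2 := by
  simp [EuclideanSpace.norm_sq_eq]

theorem integrable_norm_sub_sq_of_forall_coord
    (h : ∀ i, Integrable (fun ω => |X ω i - m i| ^ 2) P) :
    Integrable (fun ω => ‖X ω - m‖ ^ 2) P := by
  simp_rw [EuclideanSpace.norm_sub_sq_eq_sum_abs_sq]
  exact integrable_finsetSum _ fun i _ => h i

theorem integral_norm_sub_sq_le_of_forall_coord {s : ℝ}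
    (h : ∀ i, Integrable (fun ω => |X ω i - m i| ^ 2) P)
    (hle : ∀ i, ∫ ω, |X ω i - m i| ^ 2 ∂P ≤ s) :
    ∫ ω, ‖X ω - m‖ ^ 2 ∂P ≤ Fintype.card ι * s := by
  simp_rw [EuclideanSpace.norm_sub_sq_eq_sum_abs_sq]
  rw [integral_finsetSum _ fun i _ => h i]
  simpa using Finset.sum_le_sum fun i (_ : i ∈ Finset.univ) => hle i

end SecondMoment

theorem stmt7_general
    (d : ℕ)
    (f : EuclideanSpace ℝ (Fin d) → ℝ) (hf : Differentiable ℝ f)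
    (hfnonneg : ∀ x, 0 ≤ f x)
    (L : ℝ) (hL : 0 < L)
    (hsmooth : ∀ x y : EuclideanSpace ℝ (Fin d),
      ‖gradient f x - gradient f y‖ ≤ L * ‖x - y‖)
    (θ : EuclideanSpace ℝ (Fin d))
    (Ω : Type*) [MeasurableSpace Ω] (P : Measure Ω) [IsProbabilityMeasure P]
    (G : Ω → EuclideanSpace ℝ (Fin d)) (hGint : Integrable G P)
    (σ : ℝ)
    (hmean : ∫ ω, G ω ∂P = gradient f θ)
    (hvarint : ∀ i : Fin d, Integrable (fun ω => |G ω i - gradient f θ i| ^ 2) P)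
    (hvar : ∀ i : Fin d, ∫ ω, |G ω i - gradient f θ i| ^ 2 ∂P ≤ σ ^ 2)
    (μ : ℝ) (hμ : 0 < μ)
    (hPL : 2 * μ * f θ ≤ ‖gradient f θ‖ ^ 2)
    (a : ℝ) (ha : 0 < a) (haL : a ≤ 1 / L)
    (hbig : L * a * σ ^ 2 * d / μ < f θ) :
    ∫ ω, f (θ - a • G ω) ∂P ≤ (1 - μ * a / 2) * f θ := by
  set g := gradient f θ
  have hGvar := integrable_norm_sub_sq_of_forall_coord hvarint
  have hmoment : ∫ ω, ‖G ω‖ ^ 2 ∂P ≤ d * σ ^ 2 + ‖g‖ ^ 2 := by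
    rw [integral_norm_sq_eq_integral_norm_sub_sq_add hGint hmean hGvar]
    simpa using integral_norm_sub_sq_le_of_forall_coord hvarint hvar
  have haL' : a * L ≤ 1 := (le_div_iff₀ hL).mp haL
  have hbig' : L * a * σ ^ 2 * d < f θ * μ := (div_lt_iff₀ hμ).mp hbig
  calc ∫ ω, f (θ - a • G ω) ∂P
      ≤ f θ - a * ‖g‖ ^ 2 + L * a ^ 2 / 2 * (d * σ ^ 2 + ‖g‖ ^ 2) :=
        (integral_comp_sub_smul_le hf hfnonneg hsmooth θ hGint
          (integrable_norm_sq_of_integrable_norm_sub_sq hGint hGvar) hmean a).trans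
          (by gcongr)
    _ ≤ f θ - a / 2 * ‖g‖ ^ 2 + a / 2 * (L * a * σ ^ 2 * d) := by
        nlinarith [mul_nonneg (mul_nonneg ha.le (sub_nonneg.mpr haL')) (sq_nonneg ‖g‖)]
    _ ≤ (1 - μ * a / 2) * f θ := by
        nlinarith [mul_le_mul_of_nonneg_left hPL ha.le, mul_lt_mul_of_pos_left hbig' ha]

/-- one-step contraction for noisy gradient descent under PL.
If `f : ℝ^d → ℝ` is `L`-smooth and nonnegative, `G` has mean `∇f(θ)` and componentwise
noise second moment at most `σ²`, the PL inequality `‖∇f(θ)‖² ≥ 2μ f(θ)` holds at `θ`,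
`0 < a ≤ 1/L`, and `f(θ) > L a σ² d / μ`, then `E[f(θ - a G)] ≤ (1 - μ a / 2) f(θ)`. -/
theorem stmt7
    (d : ℕ) (hd : 1 ≤ d)
    (f : EuclideanSpace ℝ (Fin d) → ℝ) (hf : Differentiable ℝ f)
    (hfnonneg : ∀ x, 0 ≤ f x)
    (L : ℝ) (hL : 0 < L)
    (hsmooth : ∀ x y : EuclideanSpace ℝ (Fin d),
      ‖gradient f x - gradient f y‖ ≤ L * ‖x - y‖)
    (θ : EuclideanSpace ℝ (Fin d))
    (Ω : Type*) [MeasurableSpace Ω] (P : Measure Ω) [IsProbabilityMeasure P]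
    (G : Ω → EuclideanSpace ℝ (Fin d)) (hGmeas : Measurable G) (hGint : Integrable G P)
    (σ : ℝ) (hσ : 0 < σ)
    (hmean : ∫ ω, G ω ∂P = gradient f θ)
    (hvarint : ∀ i : Fin d, Integrable (fun ω => |G ω i - gradient f θ i| ^ 2) P)
    (hvar : ∀ i : Fin d, ∫ ω, |G ω i - gradient f θ i| ^ 2 ∂P ≤ σ ^ 2)
    (μ : ℝ) (hμ : 0 < μ)
    (hPL : 2 * μ * f θ ≤ ‖gradient f θ‖ ^ 2)
    (a : ℝ) (ha : 0 < a) (haL : a ≤ 1 / L)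
    (hbig : L * a * σ ^ 2 * d / μ < f θ) :
    ∫ ω, f (θ - a • G ω) ∂P ≤ (1 - μ * a / 2) * f θ :=
  stmt7_general d f hf hfnonneg L hL hsmooth θ Ω P G hGint σ hmean hvarint hvar μ hμ hPL a ha haL
    hbig
end

section
/- Let d ≥ 1, let f : ℝ^d → ℝ be L-smooth and satisfy the local PL condition with constants δ_f, μ > 0, let g satisfy the noise model with constant σ∞ > 0, and consider the noisy GD iterates with deterministic initial point θ_1 satisfying f(θ_1) < δ_f, learning rate 0 < a < min{1/L, μ ε/(L σ∞² d)}, where 0 < ε < δ_f. Define the stopping time τ = inf{ k ≥ 1 : f(θ_k) ≤ ε } and, for an integer N ≥ 1, let p_fail = P(τ > N). Then p_fail ≤ (1 − μ a p_fail / 2)^{N−1} · f(θ_1)/ε + f(θ_1)/δ_f. -/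
/-!
While `f (θ k)` stays in the band `(ε, δf)`, the descent lemma, unbiasedness, the variance bound
and the PL inequality give the conditional contraction `E[f (θ (k+1)) | past] ≤ (1 - μa/2) f (θ k)`;
the step is independent of the past, so it can be frozen. Hence `u k`, the mean of `f (θ k)` on
the event that the trajectory stayed in the band before time `k`, decays geometrically, and the
mass leaving through the top of the band telescopes: `δf · P(exit at k) ≤ u k - u (k+1)`.
Failing by time `N` means surviving in the band (Markov at level `ε`) or exiting above `δf`
(Markov at level `δf`), and `p_fail ≤ 1` turns `1 - μa/2` into `1 - μ a p_fail / 2`.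
-/

open MeasureTheory ProbabilityTheory
open scoped ENNReal

section Smooth

variable {E : Type*} [NormedAddCommGroup E] [InnerProductSpace ℝ E] [CompleteSpace E]
  {f : E → ℝ} {L : ℝ}

theorem le_add_inner_gradient_add_of_lipschitz (hf : Differentiable ℝ f)
    (hsmooth : ∀ x y, ‖gradient f x - gradient f y‖ ≤ L * ‖x - y‖) (x y : E) :
    f y ≤ f x + inner ℝ (gradient f x) (y - x) + L / 2 * ‖y - x‖ ^ 2 := by
  set v := y - x
  -- `φ` has a nonpositive derivative on `t ≥ 0`, so `φ 1 ≤ φ 0`.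
  let φ : ℝ → ℝ := fun t =>
    f (x + t • v) - t * inner ℝ (gradient f x) v - L / 2 * t ^ 2 * ‖v‖ ^ 2
  have hφ : ∀ t, HasDerivAt φ
      (inner ℝ (gradient f (x + t • v)) v - inner ℝ (gradient f x) v - L * t * ‖v‖ ^ 2) t := by
    intro t
    have hline : HasDerivAt (fun s : ℝ => x + s • v) v t := by
      simpa using ((hasDerivAt_id t).smul_const v).const_add x
    have hquad := ((hasDerivAt_pow 2 t).const_mul (L / 2)).mul_const (‖v‖ ^ 2)
    have hcomp : HasDerivAt (fun s : ℝ => f (x + s • v)) (inner ℝ (gradient f (x + t • v)) v) t :=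
      (hf _).hasGradientAt.hasFDerivAt.comp_hasDerivAt t hline
    exact ((hcomp.sub ((hasDerivAt_id t).mul_const _)).sub hquad).congr_deriv (by push_cast; ring)
  have hanti : AntitoneOn φ (Set.Ici 0) := by
    refine antitoneOn_of_hasDerivWithinAt_nonpos (convex_Ici 0)
      (fun t _ => (hφ t).continuousAt.continuousWithinAt)
      (fun t _ => (hφ t).hasDerivWithinAt) fun t ht => ?_
    rw [interior_Ici, Set.mem_Ioi] at ht
    have hgrad : inner ℝ (gradient f (x + t • v) - gradient f x) v ≤ L * t * ‖v‖ ^ 2 :=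
      calc inner ℝ (gradient f (x + t • v) - gradient f x) v
          ≤ ‖gradient f (x + t • v) - gradient f x‖ * ‖v‖ := real_inner_le_norm _ _
        _ ≤ L * ‖t • v‖ * ‖v‖ := by
          gcongr
          simpa using hsmooth (x + t • v) x
        _ = L * t * ‖v‖ ^ 2 := by rw [norm_smul, Real.norm_of_nonneg ht.le]; ring
    rw [inner_sub_left] at hgrad
    linarith
  have h := hanti Set.self_mem_Ici (Set.mem_Ici.2 zero_le_one) zero_le_one
  simp only [φ, v, zero_smul, add_zero, one_smul, add_sub_cancel] at h
  linarith

theorem norm_sq_gradient_le (hf : Differentiable ℝ f) (hL : 0 < L)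
    (hsmooth : ∀ x y, ‖gradient f x - gradient f y‖ ≤ L * ‖x - y‖) (hf0 : ∀ x, 0 ≤ f x) (x : E) :
    ‖gradient f x‖ ^ 2 ≤ 2 * L * f x := by
  have h := le_add_inner_gradient_add_of_lipschitz hf hsmooth x (x - L⁻¹ • gradient f x)
  rw [sub_sub_cancel_left, inner_neg_right, real_inner_smul_right, real_inner_self_eq_norm_sq,
    norm_neg, norm_smul, Real.norm_of_nonneg (inv_nonneg.2 hL.le)] at h
  have hquad : L / 2 * (L⁻¹ * ‖gradient f x‖) ^ 2 = L⁻¹ * ‖gradient f x‖ ^ 2 / 2 := by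
    field_simp
  have hstep : L⁻¹ * ‖gradient f x‖ ^ 2 ≤ 2 * f x := by
    linarith [hf0 (x - L⁻¹ • gradient f x)]
  calc ‖gradient f x‖ ^ 2 = L * (L⁻¹ * ‖gradient f x‖ ^ 2) := by field_simp
    _ ≤ L * (2 * f x) := by gcongr
    _ = 2 * L * f x := by ring

theorem le_lipschitz_const_of_PL {μ : ℝ} (hf : Differentiable ℝ f) (hL : 0 < L)
    (hsmooth : ∀ x y, ‖gradient f x - gradient f y‖ ≤ L * ‖x - y‖) (hf0 : ∀ x, 0 ≤ f x) {x : E}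
    (hx : 0 < f x) (hPL : 2 * μ * f x ≤ ‖gradient f x‖ ^ 2) : μ ≤ L := by
  nlinarith [norm_sq_gradient_le hf hL hsmooth hf0 x]

end Smooth

section Expectation

variable {Ω : Type*} [MeasurableSpace Ω] {P : Measure Ω}

theorem EuclideanSpace.integrable_norm_sub_sq {ι : Type*} [Fintype ι]
    {Y : Ω → EuclideanSpace ℝ ι} {m : EuclideanSpace ℝ ι}
    (h : ∀ i, Integrable (fun ω => |Y ω i - m i| ^ 2) P) :
    Integrable (fun ω => ‖Y ω - m‖ ^ 2) P := by
  simpa [EuclideanSpace.norm_sq_eq] using integrable_finsetSum Finset.univ fun i _ => h i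

theorem EuclideanSpace.integral_norm_sub_sq_le {ι : Type*} [Fintype ι]
    {Y : Ω → EuclideanSpace ℝ ι} {m : EuclideanSpace ℝ ι} {s : ℝ}
    (h : ∀ i, Integrable (fun ω => |Y ω i - m i| ^ 2) P)
    (hs : ∀ i, ∫ ω, |Y ω i - m i| ^ 2 ∂P ≤ s) :
    ∫ ω, ‖Y ω - m‖ ^ 2 ∂P ≤ Fintype.card ι * s := by
  simp only [EuclideanSpace.norm_sq_eq, PiLp.sub_apply, Real.norm_eq_abs]
  rw [integral_finsetSum _ fun i _ => h i]
  simpa using Finset.sum_le_sum fun i (_ : i ∈ Finset.univ) => hs i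

variable [IsProbabilityMeasure P] {E : Type*} [NormedAddCommGroup E] [InnerProductSpace ℝ E]
  [CompleteSpace E] {f : E → ℝ} {L : ℝ}

theorem lintegral_ofReal_sub_smul_le (hf : Differentiable ℝ f)
    (hsmooth : ∀ x y, ‖gradient f x - gradient f y‖ ≤ L * ‖x - y‖) (hf0 : ∀ x, 0 ≤ f x)
    {x : E} {Y : Ω → E} (hY : Integrable Y P) (hmean : ∫ ω, Y ω ∂P = gradient f x)
    (hvar : Integrable (fun ω => ‖Y ω - gradient f x‖ ^ 2) P) (a : ℝ) :
    ∫⁻ ω, ENNReal.ofReal (f (x - a • Y ω)) ∂P ≤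
      ENNReal.ofReal (f x - a * (1 - L * a / 2) * ‖gradient f x‖ ^ 2 +
        L * a ^ 2 / 2 * ∫ ω, ‖Y ω - gradient f x‖ ^ 2 ∂P) := by
  set m := gradient f x with hm
  -- The descent lemma at `x - a • Y ω`, with `‖Y ω‖ ^ 2` expanded around the mean `m`.
  let B : Ω → ℝ := fun ω => f x + (L * a ^ 2 - a) * inner ℝ m (Y ω) +
    L * a ^ 2 / 2 * ‖Y ω - m‖ ^ 2 - L * a ^ 2 / 2 * ‖m‖ ^ 2
  have hfB : ∀ ω, f (x - a • Y ω) ≤ B ω := by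
    intro ω
    have hdesc := le_add_inner_gradient_add_of_lipschitz hf hsmooth x (x - a • Y ω)
    rw [sub_sub_cancel_left, inner_neg_right, real_inner_smul_right, norm_neg, norm_smul, mul_pow,
      Real.norm_eq_abs, sq_abs, ← hm] at hdesc
    have hsq := norm_sub_sq_real (Y ω) m
    rw [real_inner_comm] at hsq
    simp only [B]
    linear_combination hdesc - L * a ^ 2 / 2 * hsq
  have hB : Integrable B P :=
    (((integrable_const _).add ((hY.const_inner m).const_mul _)).add (hvar.const_mul _)).sub
      (integrable_const _)
  have hB_eq : ∫ ω, B ω ∂P = f x - a * (1 - L * a / 2) * ‖m‖ ^ 2 +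
      L * a ^ 2 / 2 * ∫ ω, ‖Y ω - m‖ ^ 2 ∂P := by
    simp only [B]
    rw [integral_sub _ (integrable_const _), integral_add _ (hvar.const_mul _),
      integral_add (integrable_const _) ((hY.const_inner m).const_mul _), integral_const_mul,
      integral_const_mul, integral_inner hY, hmean, real_inner_self_eq_norm_sq]
    · simp only [integral_const, probReal_univ, smul_eq_mul, one_mul]
      ring
    · exact (integrable_const _).add ((hY.const_inner m).const_mul _)
    · exact ((integrable_const _).add ((hY.const_inner m).const_mul _)).add (hvar.const_mul _)
  calc ∫⁻ ω, ENNReal.ofReal (f (x - a • Y ω)) ∂P ≤ ∫⁻ ω, ENNReal.ofReal (B ω) ∂P :=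
        lintegral_mono fun ω => ENNReal.ofReal_le_ofReal (hfB ω)
    _ = ENNReal.ofReal (∫ ω, B ω ∂P) :=
        (ofReal_integral_eq_lintegral_ofReal hB (ae_of_all _ fun ω => (hf0 _).trans (hfB ω))).symm
    _ = _ := by rw [hB_eq]

theorem lintegral_ofReal_sub_smul_le_of_PL {ι : Type*} [Fintype ι]
    {f : EuclideanSpace ℝ ι → ℝ} {L μ σ ε a : ℝ} (hf : Differentiable ℝ f)
    (hsmooth : ∀ x y, ‖gradient f x - gradient f y‖ ≤ L * ‖x - y‖) (hf0 : ∀ x, 0 ≤ f x)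
    (hL : 0 ≤ L) (hμ : 0 ≤ μ) (ha : 0 ≤ a) (haL : a * L ≤ 1)
    (haσ : a * (L * σ ^ 2 * Fintype.card ι) ≤ μ * ε) {x : EuclideanSpace ℝ ι} (hx : ε ≤ f x)
    (hPL : 2 * μ * f x ≤ ‖gradient f x‖ ^ 2) {Y : Ω → EuclideanSpace ℝ ι} (hY : Integrable Y P)
    (hmean : ∫ ω, Y ω ∂P = gradient f x)
    (hvarint : ∀ i, Integrable (fun ω => |Y ω i - gradient f x i| ^ 2) P)
    (hvar : ∀ i, ∫ ω, |Y ω i - gradient f x i| ^ 2 ∂P ≤ σ ^ 2) :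
    ∫⁻ ω, ENNReal.ofReal (f (x - a • Y ω)) ∂P ≤ ENNReal.ofReal ((1 - μ * a / 2) * f x) := by
  refine (lintegral_ofReal_sub_smul_le hf hsmooth hf0 hY hmean
    (EuclideanSpace.integrable_norm_sub_sq hvarint) a).trans (ENNReal.ofReal_le_ofReal ?_)
  have hV := EuclideanSpace.integral_norm_sub_sq_le hvarint hvar
  -- `a L ≤ 1` keeps half of the gradient term, PL turns it into `a μ f x`, and the noise term is
  -- at most `a μ ε / 2 ≤ a μ f x / 2`.
  linarith [mul_le_mul_of_nonneg_left hPL ha,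
    mul_nonneg (mul_nonneg ha (sub_nonneg.2 haL)) (sq_nonneg ‖gradient f x‖),
    mul_le_mul_of_nonneg_left hV (by positivity : 0 ≤ L * a ^ 2),
    mul_le_mul_of_nonneg_left haσ ha, mul_le_mul_of_nonneg_left hx (mul_nonneg ha hμ)]

end Expectation

section Band

variable {Ω : Type*} {Z : ℕ → Ω → ℝ≥0∞} {ε δ c : ℝ≥0∞}

def bandEvent (Z : ℕ → Ω → ℝ≥0∞) (ε δ : ℝ≥0∞) (n : ℕ) : Set Ω :=
  ⋂ k ∈ Finset.range n, Z k ⁻¹' Set.Ioo ε δ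

@[simp]
theorem bandEvent_zero : bandEvent Z ε δ 0 = Set.univ := by
  simp [bandEvent]

theorem bandEvent_succ (n : ℕ) :
    bandEvent Z ε δ (n + 1) = bandEvent Z ε δ n ∩ Z n ⁻¹' Set.Ioo ε δ := by
  simp only [bandEvent, Finset.range_add_one, Finset.set_biInter_insert, Set.inter_comm]

theorem bandEvent_succ_subset (n : ℕ) : bandEvent Z ε δ (n + 1) ⊆ bandEvent Z ε δ n := by
  rw [bandEvent_succ]
  exact Set.inter_subset_left

theorem measurableSet_bandEvent {m : MeasurableSpace Ω} {n : ℕ}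
    (hZ : ∀ k < n, Measurable (Z k)) : MeasurableSet (bandEvent Z ε δ n) :=
  Finset.measurableSet_biInter _ fun k hk => hZ k (Finset.mem_range.1 hk) measurableSet_Ioo

theorem setOf_forall_le_lt_subset (N : ℕ) :
    {ω | ∀ k ≤ N, ε < Z k ω} ⊆ (bandEvent Z ε δ N ∩ {ω | ε < Z N ω}) ∪
      ⋃ k ∈ Finset.range N, bandEvent Z ε δ k ∩ {ω | δ ≤ Z k ω} := by
  induction N with
  | zero => intro ω hω; simp [hω 0 le_rfl]
  | succ N ih =>
    intro ω hω
    rcases ih fun k hk => hω k (hk.trans N.le_succ) with ⟨hband, hεN⟩ | hexit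
    · by_cases hδN : Z N ω < δ
      · left
        rw [bandEvent_succ]
        exact ⟨⟨hband, hεN, hδN⟩, hω (N + 1) le_rfl⟩
      · right
        simp only [Set.mem_iUnion, Finset.mem_range]
        exact ⟨N, N.lt_succ_self, hband, not_lt.1 hδN⟩
    · right
      simp only [Set.mem_iUnion, Finset.mem_range] at hexit ⊢
      obtain ⟨k, hk, hωk⟩ := hexit
      exact ⟨k, hk.trans N.lt_succ_self, hωk⟩

variable [MeasurableSpace Ω] {μ : Measure Ω}

def ContractsInBand (μ : Measure Ω) (Z : ℕ → Ω → ℝ≥0∞) (ε δ c : ℝ≥0∞) : Prop :=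
  ∀ n, ∫⁻ ω in bandEvent Z ε δ (n + 1), Z (n + 1) ω ∂μ ≤
    c * ∫⁻ ω in bandEvent Z ε δ (n + 1), Z n ω ∂μ

theorem mul_measure_le_setLIntegral {f : Ω → ℝ≥0∞} {r : ℝ≥0∞} {s t : Set Ω}
    (ht : MeasurableSet t) (hts : t ⊆ s) (hr : ∀ ω ∈ t, r ≤ f ω) :
    r * μ t ≤ ∫⁻ ω in s, f ω ∂μ :=
  calc r * μ t = ∫⁻ _ in t, r ∂μ := (setLIntegral_const t r).symm
    _ ≤ ∫⁻ ω in t, f ω ∂μ := setLIntegral_mono' ht hr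
    _ ≤ ∫⁻ ω in s, f ω ∂μ := lintegral_mono_set hts

theorem setLIntegral_bandEvent_succ_add_le (hZ : ∀ k, Measurable (Z k)) (n : ℕ) :
    ∫⁻ ω in bandEvent Z ε δ (n + 1), Z n ω ∂μ + δ * μ (bandEvent Z ε δ n ∩ {ω | δ ≤ Z n ω}) ≤
      ∫⁻ ω in bandEvent Z ε δ n, Z n ω ∂μ := by
  set exit := bandEvent Z ε δ n ∩ {ω | δ ≤ Z n ω}
  have hexit : MeasurableSet exit :=
    (measurableSet_bandEvent fun k _ => hZ k).inter (measurableSet_le measurable_const (hZ n))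
  have hdisj : Disjoint (bandEvent Z ε δ (n + 1)) exit := by
    rw [bandEvent_succ, Set.disjoint_left]
    exact fun ω hω hω' => (hω.2.2.trans_le hω'.2).false
  calc
    _ ≤ ∫⁻ ω in bandEvent Z ε δ (n + 1), Z n ω ∂μ + ∫⁻ ω in exit, Z n ω ∂μ := by
      gcongr
      exact mul_measure_le_setLIntegral hexit subset_rfl fun ω hω => hω.2
    _ = ∫⁻ ω in bandEvent Z ε δ (n + 1) ∪ exit, Z n ω ∂μ := (lintegral_union hexit hdisj).symm
    _ ≤ _ := lintegral_mono_set (Set.union_subset (bandEvent_succ_subset n) Set.inter_subset_left)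

namespace ContractsInBand

theorem setLIntegral_bandEvent_le_pow (h : ContractsInBand μ Z ε δ c) (n : ℕ) :
    ∫⁻ ω in bandEvent Z ε δ n, Z n ω ∂μ ≤ c ^ n * ∫⁻ ω, Z 0 ω ∂μ := by
  induction n with
  | zero => simp
  | succ n ih =>
    calc ∫⁻ ω in bandEvent Z ε δ (n + 1), Z (n + 1) ω ∂μ
        ≤ c * ∫⁻ ω in bandEvent Z ε δ (n + 1), Z n ω ∂μ := h n
      _ ≤ c * ∫⁻ ω in bandEvent Z ε δ n, Z n ω ∂μ := by
        gcongr
        exact bandEvent_succ_subset n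
      _ ≤ c ^ (n + 1) * ∫⁻ ω, Z 0 ω ∂μ := by
        rw [pow_succ', mul_assoc]
        gcongr

theorem setLIntegral_bandEvent_add_sum_le (h : ContractsInBand μ Z ε δ c)
    (hZ : ∀ k, Measurable (Z k)) (hc : c ≤ 1) (N : ℕ) :
    ∫⁻ ω in bandEvent Z ε δ N, Z N ω ∂μ +
        δ * ∑ k ∈ Finset.range N, μ (bandEvent Z ε δ k ∩ {ω | δ ≤ Z k ω}) ≤
      ∫⁻ ω, Z 0 ω ∂μ := by
  induction N with
  | zero => simp
  | succ N ih =>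
    have hnext : ∫⁻ ω in bandEvent Z ε δ (N + 1), Z (N + 1) ω ∂μ ≤
        ∫⁻ ω in bandEvent Z ε δ (N + 1), Z N ω ∂μ :=
      (h N).trans (mul_le_of_le_one_left' hc)
    calc
      _ ≤ (∫⁻ ω in bandEvent Z ε δ (N + 1), Z N ω ∂μ +
            δ * μ (bandEvent Z ε δ N ∩ {ω | δ ≤ Z N ω})) +
          δ * ∑ k ∈ Finset.range N, μ (bandEvent Z ε δ k ∩ {ω | δ ≤ Z k ω}) := by
        rw [Finset.sum_range_succ, mul_add]
        grw [hnext]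
        rw [add_comm (δ * _) (δ * _), add_assoc]
      _ ≤ _ := by
        grw [setLIntegral_bandEvent_succ_add_le hZ N]
        exact ih

theorem measure_forall_lt_le (h : ContractsInBand μ Z ε δ c) (hZ : ∀ k, Measurable (Z k))
    (hε₀ : ε ≠ 0) (hε : ε ≠ ∞) (hδ₀ : δ ≠ 0) (hδ : δ ≠ ∞) (hc : c ≤ 1) (N : ℕ) :
    μ {ω | ∀ k ≤ N, ε < Z k ω} ≤
      c ^ N * (∫⁻ ω, Z 0 ω ∂μ) / ε + (∫⁻ ω, Z 0 ω ∂μ) / δ := by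
  have hsurvive : μ (bandEvent Z ε δ N ∩ {ω | ε < Z N ω}) ≤ c ^ N * (∫⁻ ω, Z 0 ω ∂μ) / ε := by
    rw [ENNReal.le_div_iff_mul_le (Or.inl hε₀) (Or.inl hε), mul_comm]
    refine le_trans ?_ (h.setLIntegral_bandEvent_le_pow N)
    exact mul_measure_le_setLIntegral
      ((measurableSet_bandEvent fun k _ => hZ k).inter (measurableSet_lt measurable_const (hZ N)))
      Set.inter_subset_left fun ω hω => hω.2.le
  have hexits : ∑ k ∈ Finset.range N, μ (bandEvent Z ε δ k ∩ {ω | δ ≤ Z k ω}) ≤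
      (∫⁻ ω, Z 0 ω ∂μ) / δ := by
    rw [ENNReal.le_div_iff_mul_le (Or.inl hδ₀) (Or.inl hδ), mul_comm]
    exact le_add_self.trans (h.setLIntegral_bandEvent_add_sum_le hZ hc N)
  calc μ {ω | ∀ k ≤ N, ε < Z k ω}
      ≤ μ ((bandEvent Z ε δ N ∩ {ω | ε < Z N ω}) ∪
          ⋃ k ∈ Finset.range N, bandEvent Z ε δ k ∩ {ω | δ ≤ Z k ω}) :=
        measure_mono (setOf_forall_le_lt_subset N)
    _ ≤ μ (bandEvent Z ε δ N ∩ {ω | ε < Z N ω}) +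
          ∑ k ∈ Finset.range N, μ (bandEvent Z ε δ k ∩ {ω | δ ≤ Z k ω}) :=
        (measure_union_le _ _).trans (by gcongr; exact measure_biUnion_finset_le _ _)
    _ ≤ _ := add_le_add hsurvive hexits

end ContractsInBand

end Band

section RandomRecursion

variable {Ω Ω' E : Type*} [MeasurableSpace Ω] {m mΩ' : MeasurableSpace Ω'} [MeasurableSpace E]
  {μ : Measure Ω'} {ξ : ℕ → Ω' → Ω}

theorem lintegral_comp_eq_lintegral_lintegral_of_indepFun [IsFiniteMeasure μ] {X : Ω' → E}
    {Y : Ω' → Ω} (hXY : IndepFun X Y μ) (hX : Measurable X) (hY : Measurable Y)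
    {φ : E → Ω → ℝ≥0∞} (hφ : Measurable (Function.uncurry φ)) :
    ∫⁻ ω, φ (X ω) (Y ω) ∂μ = ∫⁻ ω, ∫⁻ y, φ (X ω) y ∂(μ.map Y) ∂μ := by
  calc ∫⁻ ω, φ (X ω) (Y ω) ∂μ = ∫⁻ p, Function.uncurry φ p ∂(μ.map fun ω => (X ω, Y ω)) :=
        (lintegral_map hφ (hX.prodMk hY)).symm
    _ = ∫⁻ x, ∫⁻ y, φ x y ∂(μ.map Y) ∂(μ.map X) := by
        rw [(indepFun_iff_map_prod_eq_prod_map_map hX.aemeasurable hY.aemeasurable).1 hXY,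
          lintegral_prod _ hφ.aemeasurable]
        rfl
    _ = _ := lintegral_map hφ.lintegral_prod_right' hX

theorem setLIntegral_comp_eq_of_indep [IsFiniteMeasure μ]
    (hm : m ≤ mΩ') {Y : Ω' → Ω} (hind : Indep m (MeasurableSpace.comap Y inferInstance) μ)
    (hY : Measurable Y) {X : Ω' → E} (hX : Measurable[m] X) {B : Set Ω'} (hB : MeasurableSet[m] B)
    {φ : E → Ω → ℝ≥0∞} (hφ : Measurable (Function.uncurry φ)) :
    ∫⁻ ω in B, φ (X ω) (Y ω) ∂μ = ∫⁻ ω in B, ∫⁻ y, φ (X ω) y ∂(μ.map Y) ∂μ := by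
  -- Freeze the pair `(X, 1_B)`, which is `m`-measurable and hence independent of `Y`.
  have hXB : Measurable[m] fun ω => (X ω, B.indicator (fun _ => (1 : ℝ≥0∞)) ω) :=
    hX.prodMk (measurable_const.indicator hB)
  have hindXB : IndepFun (fun ω => (X ω, B.indicator (fun _ => (1 : ℝ≥0∞)) ω)) Y μ :=
    (IndepFun_iff_Indep _ _ _).2 (indep_of_indep_of_le_left hind hXB.comap_le)
  have hrestrict : ∀ g : Ω' → ℝ≥0∞,
      ∫⁻ ω in B, g ω ∂μ = ∫⁻ ω, B.indicator (fun _ => 1) ω * g ω ∂μ := by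
    intro g
    rw [← lintegral_indicator (hm _ hB)]
    congr 1; funext ω; by_cases h : ω ∈ B <;> simp [h]
  calc ∫⁻ ω in B, φ (X ω) (Y ω) ∂μ
      = ∫⁻ ω, B.indicator (fun _ => 1) ω * φ (X ω) (Y ω) ∂μ := hrestrict _
    _ = ∫⁻ ω, ∫⁻ y, B.indicator (fun _ => 1) ω * φ (X ω) y ∂(μ.map Y) ∂μ :=
        lintegral_comp_eq_lintegral_lintegral_of_indepFun (φ := fun p y => p.2 * φ p.1 y) hindXB
          (hXB.mono hm le_rfl) hY ((measurable_snd.comp measurable_fst).mul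
            (hφ.comp ((measurable_fst.comp measurable_fst).prodMk measurable_snd)))
    _ = ∫⁻ ω, B.indicator (fun _ => 1) ω * ∫⁻ y, φ (X ω) y ∂(μ.map Y) ∂μ :=
        lintegral_congr fun ω => lintegral_const_mul _ (hφ.comp measurable_prodMk_left)
    _ = _ := (hrestrict _).symm

abbrev history (ξ : ℕ → Ω' → Ω) (n : ℕ) : MeasurableSpace Ω' :=
  ⨆ i ∈ Set.Iio n, MeasurableSpace.comap (ξ i) inferInstance

theorem history_mono : Monotone (history ξ) :=
  fun _ _ hmn => biSup_mono fun _ hi => lt_of_lt_of_le hi hmn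

theorem history_le (hξ : ∀ i, Measurable (ξ i)) (n : ℕ) : history ξ n ≤ mΩ' :=
  iSup₂_le fun i _ => (hξ i).comap_le

theorem measurable_history_succ (n : ℕ) : Measurable[history ξ (n + 1)] (ξ n) :=
  Measurable.of_comap_le
    (le_iSup₂ (f := fun i (_ : i ∈ Set.Iio (n + 1)) => MeasurableSpace.comap (ξ i) _) n
      n.lt_succ_self)

theorem indep_history (hξ : ∀ i, Measurable (ξ i)) (hind : iIndepFun ξ μ) (n : ℕ) :
    Indep (history ξ n) (MeasurableSpace.comap (ξ n) inferInstance) μ := by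
  have h := indep_iSup_of_disjoint (fun i => (hξ i).comap_le)
    ((iIndepFun_iff_iIndep _ _ _).1 hind) (S := Set.Iio n) (T := {n}) (by simp)
  rwa [iSup_singleton] at h

variable {T : E → Ω → E} {θ : ℕ → Ω' → E} {x₀ : E}

theorem measurable_history_iterate (hT : Measurable (Function.uncurry T))
    (hθ₀ : ∀ ω, θ 0 ω = x₀) (hθ : ∀ n ω, θ (n + 1) ω = T (θ n ω) (ξ n ω)) (n : ℕ) :
    Measurable[history ξ n] (θ n) := by
  induction n with
  | zero => rw [funext hθ₀]; exact measurable_const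
  | succ n ih =>
    rw [funext (hθ n)]
    exact hT.comp ((ih.mono (history_mono n.le_succ) le_rfl).prodMk (measurable_history_succ n))

theorem contractsInBand_iterate [IsFiniteMeasure μ] {P : Measure Ω}
    {V : E → ℝ≥0∞} {ε δ c : ℝ≥0∞} (hT : Measurable (Function.uncurry T)) (hV : Measurable V)
    (hξ : ∀ i, Measurable (ξ i)) (hind : iIndepFun ξ μ) (hlaw : ∀ n, μ.map (ξ n) = P)
    (hθ₀ : ∀ ω, θ 0 ω = x₀) (hθ : ∀ n ω, θ (n + 1) ω = T (θ n ω) (ξ n ω))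
    (hcontract : ∀ x, V x ∈ Set.Ioo ε δ → ∫⁻ ω, V (T x ω) ∂P ≤ c * V x) :
    ContractsInBand μ (fun k ω => V (θ k ω)) ε δ c := by
  intro n
  set B := bandEvent (fun k ω => V (θ k ω)) ε δ (n + 1) with hB_def
  have hθn : ∀ k ≤ n, Measurable[history ξ n] (θ k) := fun k hk =>
    (measurable_history_iterate hT hθ₀ hθ k).mono (history_mono hk) le_rfl
  have hB : MeasurableSet[history ξ n] B :=
    measurableSet_bandEvent fun k hk => hV.comp (hθn k (Nat.lt_succ_iff.1 hk))
  calc ∫⁻ ω in B, V (θ (n + 1) ω) ∂μ = ∫⁻ ω in B, V (T (θ n ω) (ξ n ω)) ∂μ := by simp_rw [hθ]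
    _ = ∫⁻ ω in B, ∫⁻ y, V (T (θ n ω) y) ∂P ∂μ := by
        rw [← hlaw n]
        exact setLIntegral_comp_eq_of_indep (history_le hξ n) (indep_history hξ hind n) (hξ n)
          (hθn n le_rfl) hB (φ := fun x y => V (T x y)) (hV.comp hT)
    _ ≤ ∫⁻ ω in B, c * V (θ n ω) ∂μ := by
        refine setLIntegral_mono' (history_le hξ n _ hB) fun ω hω => hcontract _ ?_
        rw [hB_def, bandEvent_succ] at hω
        exact hω.2
    _ = c * ∫⁻ ω in B, V (θ n ω) ∂μ :=
        lintegral_const_mul _ (hV.comp ((hθn n le_rfl).mono (history_le hξ n) le_rfl))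

theorem measureReal_forall_lt_iterate_le [IsProbabilityMeasure μ] {P : Measure Ω} {V : E → ℝ}
    {ε δ c : ℝ} (hT : Measurable (Function.uncurry T)) (hV : Measurable V) (hV0 : ∀ x, 0 ≤ V x)
    (hξ : ∀ i, Measurable (ξ i)) (hind : iIndepFun ξ μ) (hlaw : ∀ n, μ.map (ξ n) = P)
    (hθ₀ : ∀ ω, θ 0 ω = x₀) (hθ : ∀ n ω, θ (n + 1) ω = T (θ n ω) (ξ n ω)) (hε : 0 < ε)
    (hδ : 0 < δ) (hc0 : 0 ≤ c) (hc1 : c ≤ 1)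
    (hcontract : ∀ x, ε < V x → V x < δ →
      ∫⁻ ω, ENNReal.ofReal (V (T x ω)) ∂P ≤ ENNReal.ofReal (c * V x)) (n : ℕ) :
    μ.real {ω | ∀ k ≤ n, ε < V (θ k ω)} ≤ c ^ n * (V x₀ / ε) + V x₀ / δ := by
  have hcontract' : ∀ x, ENNReal.ofReal (V x) ∈ Set.Ioo (ENNReal.ofReal ε) (ENNReal.ofReal δ) →
      ∫⁻ ω, ENNReal.ofReal (V (T x ω)) ∂P ≤ ENNReal.ofReal c * ENNReal.ofReal (V x) := by
    rintro x ⟨hεx, hxδ⟩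
    rw [← ENNReal.ofReal_mul hc0]
    exact hcontract x ((ENNReal.ofReal_lt_ofReal_iff_of_nonneg hε.le).1 hεx)
      ((ENNReal.ofReal_lt_ofReal_iff_of_nonneg (hV0 x)).1 hxδ)
  have hZ : ∀ k, Measurable fun ω => ENNReal.ofReal (V (θ k ω)) := fun k =>
    hV.ennreal_ofReal.comp ((measurable_history_iterate hT hθ₀ hθ k).mono (history_le hξ k) le_rfl)
  have hV₀ := hV0 x₀
  refine ENNReal.toReal_le_of_le_ofReal (by positivity) ?_
  calc μ {ω | ∀ k ≤ n, ε < V (θ k ω)}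
      ≤ μ {ω | ∀ k ≤ n, ENNReal.ofReal ε < ENNReal.ofReal (V (θ k ω))} :=
        measure_mono fun ω hω k hk => (ENNReal.ofReal_lt_ofReal_iff_of_nonneg hε.le).2 (hω k hk)
    _ ≤ ENNReal.ofReal c ^ n * (∫⁻ ω, ENNReal.ofReal (V (θ 0 ω)) ∂μ) / ENNReal.ofReal ε +
          (∫⁻ ω, ENNReal.ofReal (V (θ 0 ω)) ∂μ) / ENNReal.ofReal δ :=
        (contractsInBand_iterate (V := fun x => ENNReal.ofReal (V x)) hT hV.ennreal_ofReal hξ hind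
          hlaw hθ₀ hθ hcontract').measure_forall_lt_le hZ (ENNReal.ofReal_pos.2 hε).ne'
          ENNReal.ofReal_ne_top (ENNReal.ofReal_pos.2 hδ).ne' ENNReal.ofReal_ne_top
          (ENNReal.ofReal_le_one.2 hc1) n
    _ = ENNReal.ofReal (c ^ n * (V x₀ / ε) + V x₀ / δ) := by
        simp only [hθ₀, lintegral_const, measure_univ, mul_one]
        rw [← ENNReal.ofReal_pow hc0, ← ENNReal.ofReal_mul (by positivity),
          ← ENNReal.ofReal_div_of_pos hε, ← ENNReal.ofReal_div_of_pos hδ,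
          ← ENNReal.ofReal_add (by positivity) (by positivity), mul_div_assoc]

end RandomRecursion

theorem lt_of_natCast_lt_sInf {Y : ℕ → ℝ} {ε : ℝ} {N : ℕ}
    (h : (N : ℕ∞) < sInf {k : ℕ∞ | ∃ m : ℕ, k = m ∧ 1 ≤ m ∧ Y m ≤ ε}) {m : ℕ} (h1 : 1 ≤ m)
    (hm : m ≤ N) : ε < Y m :=
  not_le.1 fun hY => h.not_ge <|
    (sInf_le (show (m : ℕ∞) ∈ {k : ℕ∞ | ∃ m : ℕ, k = m ∧ 1 ≤ m ∧ Y m ≤ ε} from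
      ⟨m, rfl, h1, hY⟩)).trans (by exact_mod_cast hm)

theorem stmt14_general
    (d : ℕ)
    (f : EuclideanSpace ℝ (Fin d) → ℝ) (hf : Differentiable ℝ f)
    (L : ℝ) (hL : 0 < L)
    (hsmooth : ∀ x y : EuclideanSpace ℝ (Fin d),
      ‖gradient f x - gradient f y‖ ≤ L * ‖x - y‖)
    (hfnonneg : ∀ x, 0 ≤ f x)
    (δf μ : ℝ) (hδf : 0 < δf) (hμ : 0 < μ)
    (hPL : ∀ x, f x < δf → 2 * μ * f x ≤ ‖gradient f x‖ ^ 2)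
    (Ω : Type*) [MeasurableSpace Ω] (P : Measure Ω) [IsProbabilityMeasure P]
    (g : EuclideanSpace ℝ (Fin d) → Ω → EuclideanSpace ℝ (Fin d))
    (hgmeas : Measurable (Function.uncurry g))
    (σ : ℝ)
    (hgint : ∀ x, Integrable (g x) P)
    (hunbiased : ∀ x, ∫ ω, g x ω ∂P = gradient f x)
    (hvarint : ∀ x i, Integrable (fun ω => |g x ω i - gradient f x i| ^ 2) P)
    (hvar : ∀ x i, ∫ ω, |g x ω i - gradient f x i| ^ 2 ∂P ≤ σ ^ 2)
    (Ω' : Type*) [MeasurableSpace Ω'] (P' : Measure Ω') [IsProbabilityMeasure P']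
    (ξ : ℕ → Ω' → Ω) (hξmeas : ∀ n, Measurable (ξ n))
    (hiid : iIndepFun ξ P')
    (hlaw : ∀ n, P'.map (ξ n) = P)
    (θ1 : EuclideanSpace ℝ (Fin d)) (hθ1 : f θ1 < δf)
    (ε : ℝ) (hε0 : 0 < ε)
    (a : ℝ) (ha0 : 0 < a)
    (ha : a < min (1 / L) (μ * ε / (L * σ ^ 2 * d)))
    (θ : ℕ → Ω' → EuclideanSpace ℝ (Fin d))
    (hθinit : ∀ ω, θ 1 ω = θ1)
    (hθrec : ∀ n, 1 ≤ n → ∀ ω, θ (n + 1) ω = θ n ω - a • g (θ n ω) (ξ n ω))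
    (τ : Ω' → ℕ∞)
    (hτ : ∀ ω, τ ω = sInf {k : ℕ∞ | ∃ m : ℕ, k = m ∧ 1 ≤ m ∧ f (θ m ω) ≤ ε})
    (N : ℕ) (hN : 1 ≤ N)
    (pfail : ℝ) (hpfail : pfail = (P' {ω | (N : ℕ∞) < τ ω}).toReal) :
    pfail ≤ (1 - μ * a * pfail / 2) ^ (N - 1) * (f θ1 / ε) + f θ1 / δf := by
  have hsurvive : ∀ ω, (N : ℕ∞) < τ ω → ∀ m, 1 ≤ m → m ≤ N → ε < f (θ m ω) := fun ω hω => by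
    rw [hτ ω] at hω
    exact fun m => lt_of_natCast_lt_sInf hω
  have hf₁ := hfnonneg θ1
  rcases le_or_gt (f θ1) ε with hθ1ε | hθ1ε
  · have hempty : {ω | (N : ℕ∞) < τ ω} = ∅ := Set.eq_empty_of_forall_notMem fun ω hω =>
      (hθ1ε.trans_lt (hθinit ω ▸ hsurvive ω hω 1 le_rfl hN)).false
    simp only [hpfail, hempty, measure_empty, ENNReal.toReal_zero, mul_zero, zero_div, sub_zero,
      one_pow, one_mul]
    positivity
  obtain ⟨n, rfl⟩ : ∃ n, N = n + 1 := ⟨N - 1, by omega⟩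
  have haL : a * L ≤ 1 := ((lt_div_iff₀ hL).1 (lt_min_iff.1 ha).1).le
  have haσ : a * (L * σ ^ 2 * Fintype.card (Fin d)) ≤ μ * ε := by
    rw [Fintype.card_fin]
    exact mul_le_of_le_div₀ (by positivity) (by positivity) (lt_min_iff.1 ha).2.le
  have hμL := le_lipschitz_const_of_PL hf hL hsmooth hfnonneg (hε0.trans hθ1ε) (hPL θ1 hθ1)
  have hc0 : 0 ≤ 1 - μ * a / 2 := by nlinarith
  -- `θ (k + 1)` and `ξ (k + 1)` are the iterates and the noise indexed from `0`.
  have hbound := measureReal_forall_lt_iterate_le (θ := fun k ω => θ (k + 1) ω)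
    (T := fun x ω => x - a • g x ω) (measurable_fst.sub (hgmeas.const_smul a))
    hf.continuous.measurable hfnonneg (fun i => hξmeas (i + 1)) (hiid.precomp Nat.succ_injective)
    (fun i => hlaw (i + 1)) hθinit (fun k => hθrec (k + 1) le_add_self) hε0 hδf hc0
    (by nlinarith) (fun x hεx hxδ => lintegral_ofReal_sub_smul_le_of_PL hf hsmooth hfnonneg hL.le
      hμ.le ha0.le haL haσ hεx.le (hPL x hxδ) (hgint x) (hunbiased x) (hvarint x) (hvar x)) n
  have hfail : {ω | ((n + 1 : ℕ) : ℕ∞) < τ ω} ⊆ {ω | ∀ k ≤ n, ε < f (θ (k + 1) ω)} :=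
    fun ω hω k hk => hsurvive ω hω (k + 1) le_add_self (by omega)
  have hpfail_le : pfail ≤ (1 - μ * a / 2) ^ n * (f θ1 / ε) + f θ1 / δf :=
    hpfail ▸ (measureReal_mono hfail).trans hbound
  have hpfail1 : μ * a * pfail ≤ μ * a :=
    mul_le_of_le_one_right (mul_pos hμ ha0).le (hpfail ▸ measureReal_le_one)
  rw [Nat.add_sub_cancel]
  exact hpfail_le.trans (add_le_add_left (mul_le_mul_of_nonneg_right
    (pow_le_pow_left₀ hc0 (by linarith) n) (by positivity)) _)

/-- bound on the failure probability of noisy gradient descent.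
Under `L`-smoothness, the local PL condition with constants `δf, μ > 0` (minimum value
normalized to `0`), the unbiased noise model with constant `σ > 0`, and noisy GD iterates
with `f(θ₁) < δf`, learning rate `0 < a < min{1/L, με/(Lσ²d)}` for a precision
`0 < ε < δf`: with the stopping time `τ = inf{k ≥ 1 : f(θ_k) ≤ ε}` and
`p_fail = P(τ > N)`, one has `p_fail ≤ (1 - μ a p_fail/2)^(N-1) f(θ₁)/ε + f(θ₁)/δf`. -/
theorem stmt14
    (d : ℕ) (hd : 1 ≤ d)
    (f : EuclideanSpace ℝ (Fin d) → ℝ) (hf : Differentiable ℝ f)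
    (L : ℝ) (hL : 0 < L)
    (hsmooth : ∀ x y : EuclideanSpace ℝ (Fin d),
      ‖gradient f x - gradient f y‖ ≤ L * ‖x - y‖)
    (hfnonneg : ∀ x, 0 ≤ f x) (hfmin : ∃ x, f x = 0)
    (δf μ : ℝ) (hδf : 0 < δf) (hμ : 0 < μ)
    (hPL : ∀ x, f x < δf → 2 * μ * f x ≤ ‖gradient f x‖ ^ 2)
    (Ω : Type*) [MeasurableSpace Ω] (P : Measure Ω) [IsProbabilityMeasure P]
    (g : EuclideanSpace ℝ (Fin d) → Ω → EuclideanSpace ℝ (Fin d))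
    (hgmeas : Measurable (Function.uncurry g))
    (σ : ℝ) (hσ : 0 < σ)
    (hgint : ∀ x, Integrable (g x) P)
    (hunbiased : ∀ x, ∫ ω, g x ω ∂P = gradient f x)
    (hvarint : ∀ x i, Integrable (fun ω => |g x ω i - gradient f x i| ^ 2) P)
    (hvar : ∀ x i, ∫ ω, |g x ω i - gradient f x i| ^ 2 ∂P ≤ σ ^ 2)
    (Ω' : Type*) [MeasurableSpace Ω'] (P' : Measure Ω') [IsProbabilityMeasure P']
    (ξ : ℕ → Ω' → Ω) (hξmeas : ∀ n, Measurable (ξ n))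
    (hiid : iIndepFun ξ P')
    (hlaw : ∀ n, P'.map (ξ n) = P)
    (θ1 : EuclideanSpace ℝ (Fin d)) (hθ1 : f θ1 < δf)
    (ε : ℝ) (hε0 : 0 < ε) (hεδ : ε < δf)
    (a : ℝ) (ha0 : 0 < a)
    (ha : a < min (1 / L) (μ * ε / (L * σ ^ 2 * d)))
    (θ : ℕ → Ω' → EuclideanSpace ℝ (Fin d))
    (hθinit : ∀ ω, θ 1 ω = θ1)
    (hθrec : ∀ n, 1 ≤ n → ∀ ω, θ (n + 1) ω = θ n ω - a • g (θ n ω) (ξ n ω))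
    (τ : Ω' → ℕ∞)
    (hτ : ∀ ω, τ ω = sInf {k : ℕ∞ | ∃ m : ℕ, k = m ∧ 1 ≤ m ∧ f (θ m ω) ≤ ε})
    (N : ℕ) (hN : 1 ≤ N)
    (pfail : ℝ) (hpfail : pfail = (P' {ω | (N : ℕ∞) < τ ω}).toReal) :
    pfail ≤ (1 - μ * a * pfail / 2) ^ (N - 1) * (f θ1 / ε) + f θ1 / δf :=
  stmt14_general d f hf L hL hsmooth hfnonneg δf μ hδf hμ hPL Ω P g hgmeas σ hgint hunbiased hvarint
    hvar Ω' P' ξ hξmeas hiid hlaw θ1 hθ1 ε hε0 a ha0 ha θ hθinit hθrec τ hτ N hN pfail hpfail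
end
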